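/- The autonomous d₄P^(I) map preserves its quintic invariant: for all a, b, c, d, x, y, z, u, x₁ in ℂ with a·x·y ≠ 0, if a·x·y·x₁ = −a·y·(x² + y² + z² + 2yz + 2xy + xz + zu) − b·y·(x + y + z) − c·y + d, then Δ₅(x₁, x, y, z) = Δ₅(x, y, z, u). -/

import Mathlib

/-!
The difference `Δ₅(x₁, x, y, z) - Δ₅(x, y, z, u)` is a polynomial multiple of the defining
relation of the map, with cofactor `x x₁ - z u + (x - z)(x + y + z)`. So `Δ₅` is conserved along
every solution of the relation.
-/

/-- The quintic invariant `Δ₅` of the autonomous `d₄P^(I)` map, in affine coordinates. -/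
noncomputable def Δ₅ (a b c d x y z u : ℂ) : ℂ :=
  a * y * z * (z*u + x*y + y^2 + 2*y*z + z^2) * (x + y + z + u)
    + b * y * z * (x + y + z) * (u + y + z)
    + c * y * z * (x + y + z + u)
    - d * (z*u + x*y + y^2 + 2*y*z + z^2)

def d4PIRelation (a b c d x y z u x₁ : ℂ) : ℂ :=
  a * x * y * x₁ + a * y * (x^2 + y^2 + z^2 + 2*y*z + 2*x*y + x*z + z*u)
    + b * y * (x + y + z) + c * y - d

theorem Δ₅_sub_Δ₅_eq_mul_d4PIRelation (a b c d x y z u x₁ : ℂ) :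
    Δ₅ a b c d x₁ x y z - Δ₅ a b c d x y z u =
      (x * x₁ - z * u + (x - z) * (x + y + z)) * d4PIRelation a b c d x y z u x₁ := by
  unfold Δ₅ d4PIRelation
  ring

theorem d4PI_preserves_Delta5_general (a b c d x y z u x₁ : ℂ)
    (hrec : a * x * y * x₁ =
      -a * y * (x^2 + y^2 + z^2 + 2*y*z + 2*x*y + x*z + z*u)
        - b * y * (x + y + z) - c * y + d) :
    Δ₅ a b c d x₁ x y z = Δ₅ a b c d x y z u := by
  have hrel : d4PIRelation a b c d x y z u x₁ = 0 := by
    unfold d4PIRelation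
    linear_combination hrec
  rw [← sub_eq_zero, Δ₅_sub_Δ₅_eq_mul_d4PIRelation, hrel, mul_zero]

/-- The autonomous `d₄P^(I)` map preserves its quintic invariant `Δ₅`. -/
theorem d4PI_preserves_Delta5 (a b c d x y z u x₁ : ℂ) (h : a * x * y ≠ 0)
    (hrec : a * x * y * x₁ =
      -a * y * (x^2 + y^2 + z^2 + 2*y*z + 2*x*y + x*z + z*u)
        - b * y * (x + y + z) - c * y + d) :
    Δ₅ a b c d x₁ x y z = Δ₅ a b c d x y z u :=
  d4PI_preserves_Delta5_general a b c d x y z u x₁ hrec
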